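/- arXiv:2605.27188 — 7 statements merged into one kernel-verified Lean document; each statement's English description precedes it below -/
import Mathlib

section
/- Let R be a commutative Noetherian local ring and let f be an element of R. Suppose that for infinitely many positive integers n there exists an ideal I of R with I^n equal to the principal ideal generated by f. Then either f = 0 or f is a unit of R. -/
/-- If `R` is a commutative Noetherian local ring and `f : R` is such that the principal
ideal `(f)` admits an `n`-th root (an ideal `I` with `I ^ n = (f)`) for infinitely many
positive integers `n`, then `f = 0` or `f` is a unit. -/
theorem stmt_0 {R : Type*} [CommRing R] [IsNoetherianRing R] [IsLocalRing R] (f : R)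
    (h : {n : ℕ | 0 < n ∧ ∃ I : Ideal R, I ^ n = Ideal.span {f}}.Infinite) :
    f = 0 ∨ IsUnit f := by
  by_cases hf : IsUnit f
  · exact Or.inr hf
  left
  have hm : IsLocalRing.maximalIdeal R ≠ ⊤ := Ideal.IsMaximal.ne_top inferInstance
  have hbot : (⨅ i : ℕ, IsLocalRing.maximalIdeal R ^ i) = ⊥ :=
    Ideal.iInf_pow_eq_bot_of_isLocalRing _ hm
  have key : ∀ k : ℕ, f ∈ IsLocalRing.maximalIdeal R ^ k := by
    intro k
    obtain ⟨n, hn, hnk⟩ := h.exists_gt k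
    obtain ⟨hpos, I, hI⟩ := hn
    have hIle : I ≤ IsLocalRing.maximalIdeal R := by
      apply IsLocalRing.le_maximalIdeal
      intro htop
      rw [htop, Ideal.top_pow] at hI
      exact hf (Ideal.span_singleton_eq_top.mp hI.symm)
    have : Ideal.span {f} ≤ IsLocalRing.maximalIdeal R ^ n := by
      rw [← hI]; exact Ideal.pow_right_mono hIle n
    have hfn : f ∈ IsLocalRing.maximalIdeal R ^ n :=
      this (Ideal.mem_span_singleton_self f)
    exact Ideal.pow_le_pow_right (le_of_lt hnk) hfn
  have : f ∈ (⊥ : Ideal R) := by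
    rw [← hbot]; exact Ideal.mem_iInf.mpr key
  simpa using this
end

section
/- Let f : X ⟶ Y be a morphism of schemes that is integral and surjective. Then the topological Krull dimension of the underlying topological space of X equals the topological Krull dimension of the underlying topological space of Y. -/
open AlgebraicGeometry Topology

/-!
Schemes are sober, so both dimensions are Krull dimensions of the specialization orders on points.
An integral morphism is universally closed, so specializations lift along it (going up); together
with surjectivity this lifts every chain of specializations in `Y` to one of the same length in `X`.
Conversely, distinct primes of an integral extension lying over the same prime are incomparable,
so `f` maps strict chains in `X` to strict chains in `Y`.
-/

lemma LTSeries.exists_lift_of_surjective_of_lift_le {α β : Type*} [PartialOrder α] [Preorder β]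
    {f : α → β} (hsurj : Function.Surjective f) (hlift : ∀ a b, b ≤ f a → ∃ a' ≤ a, f a' = b)
    (p : LTSeries β) : ∃ q : LTSeries α, q.length = p.length ∧ f q.head = p.head := by
  induction p using RelSeries.inductionOn with
  | singleton b =>
    obtain ⟨a, rfl⟩ := hsurj b
    exact ⟨RelSeries.singleton _ a, rfl, rfl⟩
  | cons p b hb ih =>
    obtain ⟨q, hlen, hhead⟩ := ih
    obtain ⟨a, hle, rfl⟩ := hlift q.head b (hhead ▸ hb.le)
    have hlt : a < q.head := hle.lt_of_ne (by rintro rfl; exact hb.ne hhead)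
    exact ⟨q.cons a hlt, by simp [hlen], by simp⟩

lemma Order.krullDim_le_of_surjective_of_lift_le {α β : Type*} [PartialOrder α] [Preorder β]
    {f : α → β} (hsurj : Function.Surjective f) (hlift : ∀ a b, b ≤ f a → ∃ a' ≤ a, f a' = b) :
    krullDim β ≤ krullDim α :=
  iSup_le fun p ↦ by
    obtain ⟨q, hlen, -⟩ := p.exists_lift_of_surjective_of_lift_le hsurj hlift
    exact hlen ▸ LTSeries.length_le_krullDim q

lemma topologicalKrullDim_eq_krullDim_specialization (X : Type*) [TopologicalSpace X]
    [QuasiSober X] [T0Space X] : topologicalKrullDim X = Order.krullDim (Specialization X) :=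
  Order.krullDim_eq_of_orderIso irreducibleSetEquivPoints

section Sober

variable {X Y : Type*} [TopologicalSpace X] [TopologicalSpace Y]
  [QuasiSober X] [T0Space X] [QuasiSober Y] [T0Space Y]

lemma topologicalKrullDim_le_of_specializingMap {f : X → Y} (hf : SpecializingMap f)
    (hsurj : Function.Surjective f) : topologicalKrullDim Y ≤ topologicalKrullDim X := by
  simp only [topologicalKrullDim_eq_krullDim_specialization]
  refine Order.krullDim_le_of_surjective_of_lift_le
    (f := Specialization.toEquiv ∘ f ∘ Specialization.ofEquiv) hsurj fun x y hyx ↦ ?_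
  obtain ⟨x', hxx', rfl⟩ := hf hyx
  exact ⟨x', hxx', rfl⟩

lemma topologicalKrullDim_le_of_continuous_of_incomparable {f : X → Y} (hf : Continuous f)
    (hinc : ∀ ⦃x x'⦄, x ⤳ x' → f x = f x' → x = x') :
    topologicalKrullDim X ≤ topologicalKrullDim Y := by
  simp only [topologicalKrullDim_eq_krullDim_specialization]
  refine Order.krullDim_le_of_strictMono (Specialization.toEquiv ∘ f ∘ Specialization.ofEquiv)
    fun x x' hlt ↦ ?_
  exact (hf.specialization_monotone hlt.le).lt_of_ne fun he ↦ hlt.ne (hinc hlt.le he.symm).symm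

end Sober

lemma PrimeSpectrum.eq_of_specializes_of_comap_eq {R S : Type*} [CommRing R] [CommRing S]
    {φ : R →+* S} (hφ : φ.IsIntegral) {p q : PrimeSpectrum S} (h : p ⤳ q)
    (he : comap φ p = comap φ q) : p = q := by
  algebraize [φ]
  by_contra hne
  have hlt : p < q := ((le_iff_specializes p q).mpr h).lt_of_ne hne
  exact (Ideal.IsIntegral.comap_lt_comap (R := R) hlt).ne congr(($he).asIdeal)

namespace AlgebraicGeometry.IsIntegralHom

lemma eq_of_specializes_of_base_eq_of_isAffine {X Y : Scheme} (f : X ⟶ Y) [IsIntegralHom f]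
    [IsAffine Y] {x x' : X} (h : x ⤳ x') (he : f.base x = f.base x') : x = x' := by
  have : IsAffine X := isAffine_of_isAffineHom f
  have hsq : ∀ z,
      Y.isoSpec.hom.base (f.base z) = (Spec.map f.appTop).base (X.isoSpec.hom.base z) := by
    intro z
    rw [← Scheme.Hom.comp_apply, ← Scheme.isoSpec_hom_naturality]
    rfl
  apply X.isoSpec.hom.isOpenEmbedding.injective
  refine PrimeSpectrum.eq_of_specializes_of_comap_eq (f.isIntegral_app ⊤ (isAffineOpen_top Y))
    (h.map X.isoSpec.hom.continuous) ?_
  have hY := congr(Y.isoSpec.hom.base $he)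
  simp only [hsq] at hY
  exact hY

lemma eq_of_specializes_of_base_eq {X Y : Scheme} (f : X ⟶ Y) [IsIntegralHom f]
    {x x' : X} (h : x ⤳ x') (he : f.base x = f.base x') : x = x' := by
  obtain ⟨U, hU, hx'U, -⟩ :=
    exists_isAffineOpen_mem_and_subset (show f.base x' ∈ (⊤ : Y.Opens) from trivial)
  have : IsAffine U := hU
  have hx' : x' ∈ f ⁻¹ᵁ U := hx'U
  have hx : x ∈ f ⁻¹ᵁ U := h.mem_open (f ⁻¹ᵁ U).isOpen hx'
  have := eq_of_specializes_of_base_eq_of_isAffine (f ∣_ U) (x := ⟨x, hx⟩) (x' := ⟨x', hx'⟩)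
    (IsInducing.subtypeVal.specializes_iff.mp h)
    (by simp only [morphismRestrict_base]; exact Subtype.ext he)
  exact congr_arg Subtype.val this

end AlgebraicGeometry.IsIntegralHom

/-- An integral surjective morphism of schemes preserves the topological Krull dimension:
if `f : X ⟶ Y` is integral and surjective, then `dim X = dim Y`. -/
theorem stmt_1 {X Y : Scheme} (f : X ⟶ Y) [IsIntegralHom f]
    (hf : Function.Surjective f.base) :
    topologicalKrullDim X = topologicalKrullDim Y :=
  le_antisymm
    (topologicalKrullDim_le_of_continuous_of_incomparable f.continuous
      fun _ _ ↦ IsIntegralHom.eq_of_specializes_of_base_eq f)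
    (topologicalKrullDim_le_of_specializingMap f.isClosedMap.specializingMap hf)
end

section
/- Let S be a compact, Hausdorff, totally disconnected topological space and let F be a sheaf of abelian groups on S. If the group of global sections F(S) is zero, then F is the zero sheaf, i.e., F(U) = 0 for every open subset U of S. -/
/-!
The clopen subsets form a basis of a profinite space, so by the sheaf axiom it suffices that
`F(V) = 0` for clopen `V`. Such a `V` is disjoint from its open complement with `V ⊔ Vᶜ = ⊤`,
so `F(⊤) ≅ F(V) × F(Vᶜ)` and `F(V)` is a retract of the zero group `F(⊤)`.
-/

open TopologicalSpace Opposite CategoryTheory Limits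

universe w u

namespace TopCat.Sheaf

section

variable {C : Type*} [Category* C] [HasZeroMorphisms C] {X : TopCat}

theorem isZero_obj_of_isZero_sup_of_inf_eq_bot (F : X.Sheaf C) {U V : Opens X} (hUV : U ⊓ V = ⊥)
    (hzero : IsZero (F.obj.obj (op (U ⊔ V)))) : IsZero (F.obj.obj (op U)) := by
  -- `F(U ⊔ V) ≅ F(U) × F(V)`, and `(𝟙, 0) : F(U) ⟶ F(U ⊔ V)` splits the first projection.
  obtain ⟨s, hs, -⟩ := BinaryFan.IsLimit.lift' (F.isProductOfDisjoint U V hUV) (𝟙 _) 0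
  rw [IsZero.iff_id_eq_zero, ← hs]
  exact (hzero.eq_zero_of_tgt s).symm ▸ zero_comp

theorem isZero_obj_of_isClopen (F : X.Sheaf C) (hF : IsZero (F.obj.obj (op ⊤))) {U : Opens X}
    (hU : IsClopen (U : Set X)) : IsZero (F.obj.obj (op U)) := by
  let V : Opens X := ⟨(U : Set X)ᶜ, hU.isClosed.isOpen_compl⟩
  refine F.isZero_obj_of_isZero_sup_of_inf_eq_bot (V := V) ?_ ?_
  · ext x; simp [V]
  · convert hF; ext x; simp [V]

end

theorem isZero_obj_of_isBasis {X : TopCat.{w}} (F : X.Sheaf AddCommGrpCat.{u}) [UnivLE.{w, u}]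
    {B : Set (Opens X)} (hB : Opens.IsBasis B) (hF : ∀ V ∈ B, IsZero (F.obj.obj (op V)))
    (U : Opens X) : IsZero (F.obj.obj (op U)) := by
  obtain ⟨Us, hUsB, rfl⟩ := Opens.isBasis_iff_cover.1 hB U
  rw [AddCommGrpCat.isZero_iff_subsingleton]
  constructor
  intro s t
  refine F.eq_of_locally_eq' (fun V : Us => V.1) _ (fun V => homOfLE (le_sSup V.2))
    (sSup_eq_iSup' Us).le s t fun V => ?_
  have := AddCommGrpCat.subsingleton_of_isZero (hF V.1 (hUsB V.2))
  exact Subsingleton.elim _ _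

end TopCat.Sheaf

theorem isBasis_isClopen_opens (X : Type*) [TopologicalSpace X] [CompactSpace X] [T2Space X]
    [TotallyDisconnectedSpace X] : Opens.IsBasis {U : Opens X | IsClopen (U : Set X)} := by
  refine Opens.isBasis_iff_nbhd.2 fun {U x} hx => ?_
  obtain ⟨V, hV, hxV, hVU⟩ := compact_exists_isClopen_in_isOpen U.isOpen hx
  exact ⟨⟨V, hV.isOpen⟩, hV, hxV, hVU⟩

/-- A sheaf of abelian groups on a profinite (compact Hausdorff totally disconnected) space
with vanishing global sections is the zero sheaf. -/
theorem stmt_3 {S : Type} [TopologicalSpace S] [CompactSpace S] [T2Space S]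
    [TotallyDisconnectedSpace S]
    (F : TopCat.Sheaf AddCommGrpCat (TopCat.of S))
    (h : ∀ s : F.val.obj (op (⊤ : Opens (TopCat.of S))), s = 0) :
    ∀ (U : Opens (TopCat.of S)) (x : F.val.obj (op U)), x = 0 := by
  intro U x
  have : Subsingleton (F.obj.obj (op ⊤)) := ⟨fun s t => (h s).trans (h t).symm⟩
  have hTop : IsZero (F.obj.obj (op ⊤)) := AddCommGrpCat.isZero_of_subsingleton _
  have hU : IsZero (F.obj.obj (op U)) := F.isZero_obj_of_isBasis (isBasis_isClopen_opens S)
    (fun _ hV => F.isZero_obj_of_isClopen hTop hV) U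
  exact (AddCommGrpCat.subsingleton_of_isZero hU).elim x 0
end

section
/- Let S be a compact, Hausdorff, totally disconnected topological space and let φ : F ⟶ G be a morphism of sheaves of abelian groups on S that is surjective on every stalk. Then the induced homomorphism F(S) → G(S) on global sections is surjective. (Consequently, the global sections functor on sheaves of abelian groups on S is exact.) -/
/-!
The stalkwise surjectivity of `φ` means that every global section `t` of `G` lifts to `F` locally,
on the members of some open cover of `S`. On a profinite space that cover can be refined to a finite
cover by pairwise disjoint clopens, and local lifts on pairwise disjoint opens always agree on the
(empty) overlaps, so they glue to a global preimage of `t`.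
-/

open TopologicalSpace Opposite CategoryTheory

open scoped Function

universe u

namespace TopCat.Sheaf

variable {X : TopCat.{u}}

lemma subsingleton_obj_of_eq_bot (F : X.Sheaf AddCommGrpCat.{u}) {U : Opens X} (hU : U = ⊥) :
    Subsingleton (F.obj.obj (op U)) :=
  AddCommGrpCat.subsingleton_of_isZero (F.isTerminalOfEqEmpty hU).isZero

lemma isCompatible_of_pairwise_disjoint (F : X.Sheaf AddCommGrpCat.{u}) {ι : Type*}
    {U : ι → Opens X} (hU : Pairwise (Disjoint on U)) (sf : ∀ i, F.obj.obj (op (U i))) :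
    Presheaf.IsCompatible F.obj U sf := by
  intro i j
  rcases eq_or_ne i j with rfl | hij
  · rfl
  · have := F.subsingleton_obj_of_eq_bot (hU hij).eq_bot
    exact Subsingleton.elim _ _

theorem exists_app_eq_of_pairwise_disjoint {F G : X.Sheaf AddCommGrpCat.{u}} (φ : F ⟶ G)
    {V : Opens X} (t : G.obj.obj (op V)) {ι : Type*} {U : ι → Opens X}
    (hU : Pairwise (Disjoint on U)) (iUV : ∀ i, U i ⟶ V) (hcover : V ≤ iSup U)
    (hlift : ∀ i, Presheaf.imageSieve φ.hom t (iUV i)) :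
    ∃ s, φ.hom.app (op V) s = t := by
  choose sf hsf using hlift
  obtain ⟨s, hs, -⟩ := F.existsUnique_gluing' U V iUV hcover sf
    (F.isCompatible_of_pairwise_disjoint hU sf)
  refine ⟨s, G.eq_of_locally_eq' U V iUV hcover _ _ fun i => ?_⟩
  rw [← NatTrans.naturality_apply, hs, hsf]

theorem app_top_surjective_of_isLocallySurjective {S : Type u} [TopologicalSpace S]
    [CompactSpace S] [T2Space S] [TotallyDisconnectedSpace S]
    {F G : (TopCat.of S).Sheaf AddCommGrpCat.{u}} (φ : F ⟶ G)
    (hφ : Presheaf.IsLocallySurjective φ.hom) :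
    Function.Surjective (φ.hom.app (op ⊤)) := by
  intro t
  choose V _ hlift hxV using fun x =>
    (Presheaf.isLocallySurjective_iff φ.hom).1 hφ ⊤ t x (Set.mem_univ x)
  have hVcover : IsOpenCover V :=
    .of_sets (fun x => (V x).isOpen) (Set.iUnion_eq_univ_iff.2 fun x => ⟨x, hxV x⟩)
  obtain ⟨n, W, hWV, hWcover, hWdisj⟩ := hVcover.exists_finite_nonempty_disjoint_clopen_cover
  refine exists_app_eq_of_pairwise_disjoint φ t (U := fun j => (W j).toOpens)
    (fun i j hij => ?_) (fun _ => homOfLE le_top) (fun x _ => ?_) fun j => ?_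
  · exact Opens.coe_disjoint.1 (Clopens.coe_disjoint.2 (hWdisj hij))
  · simpa [Opens.mem_iSup] using Set.mem_iUnion.1 (hWcover (Set.mem_univ x))
  · obtain ⟨x, hWx⟩ := (hWV j).2
    exact (Presheaf.imageSieve φ.hom t).downward_closed (hlift x) (homOfLE hWx)

end TopCat.Sheaf

/-- On a profinite (compact Hausdorff totally disconnected) space, a morphism of sheaves of
abelian groups that is surjective on all stalks is surjective on global sections; hence the
global sections functor is exact. -/
theorem stmt_5 {S : Type} [TopologicalSpace S] [CompactSpace S] [T2Space S]
    [TotallyDisconnectedSpace S]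
    {F G : TopCat.Sheaf AddCommGrpCat (TopCat.of S)} (φ : F ⟶ G)
    (hsurj : ∀ s : TopCat.of S,
      Function.Surjective ((TopCat.Presheaf.stalkFunctor AddCommGrpCat s).map φ.hom)) :
    Function.Surjective (φ.hom.app (op (⊤ : Opens (TopCat.of S)))) :=
  TopCat.Sheaf.app_top_surjective_of_isLocallySurjective φ
    ((TopCat.Presheaf.locally_surjective_iff_surjective_on_stalks φ.hom).2 hsurj)
end

section
/- Let p be a prime number, k a field of characteristic p, and G a finite commutative group whose cardinality is a power of p. Then the group algebra k[G] is a local ring. -/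
/-!
Since `k` has characteristic `p` and every `g : G` satisfies `g ^ p ^ n = 1`, the map
`x ↦ x ^ p ^ n` on `k[G]` is additive and sends `single g a` to the scalar `a ^ p ^ n`; hence
`x ^ p ^ n` is the scalar `ε(x) ^ p ^ n`, where `ε : k[G] → k` is the augmentation. So the kernel
of `ε` is nil, and a ring surjecting onto a local ring with nil kernel is local.
-/

theorem IsLocalRing.of_surjective_of_isNilpotent_of_map_eq_zero {R S : Type*} [CommRing R]
    [CommRing S] [IsLocalRing S] (f : R →+* S) (hf : Function.Surjective f)
    (hker : ∀ x, f x = 0 → IsNilpotent x) : IsLocalRing R := by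
  have := f.domain_nontrivial
  have isUnit_of_isUnit_map (a : R) (ha : IsUnit (f a)) : IsUnit a := by
    obtain ⟨b, hb⟩ := hf ↑ha.unit⁻¹
    have hab : IsUnit (a * b) := by
      simpa using (hker (1 - a * b) (by simp [hb])).isUnit_one_sub
    exact isUnit_of_mul_isUnit_left hab
  refine of_isUnit_or_isUnit_one_sub_self fun a ↦ ?_
  refine (isUnit_or_isUnit_one_sub_self (f a)).imp (isUnit_of_isUnit_map a) fun h ↦ ?_
  exact isUnit_of_isUnit_map _ (by rwa [map_sub, map_one])

namespace MonoidAlgebra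

variable {k G : Type*} [CommRing k] [CommMonoid G]

variable (k G) in
noncomputable def augmentation : MonoidAlgebra k G →ₐ[k] k :=
  lift k k G 1

@[simp]
theorem augmentation_single (g : G) (a : k) : augmentation k G (single g a) = a := by
  simp [augmentation, lift_single]

theorem augmentation_surjective : Function.Surjective (augmentation k G) :=
  fun a ↦ ⟨single 1 a, augmentation_single 1 a⟩

theorem pow_eq_algebraMap_augmentation_pow (p n : ℕ) [ExpChar k p]
    (hG : ∀ g : G, g ^ p ^ n = 1) (x : MonoidAlgebra k G) :
    x ^ p ^ n = algebraMap k (MonoidAlgebra k G) (augmentation k G x ^ p ^ n) := by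
  have := expChar_of_injective_algebraMap
    (FaithfulSMul.algebraMap_injective k (MonoidAlgebra k G)) p
  suffices iterateFrobenius (MonoidAlgebra k G) p n = (algebraMap k (MonoidAlgebra k G)).comp
      ((iterateFrobenius k p n).comp (augmentation k G).toRingHom) by
    simpa [iterateFrobenius_def] using RingHom.congr_fun this x
  refine ringHom_ext (fun a ↦ ?_) (fun g ↦ ?_)
  · simp [iterateFrobenius_def, single_pow, coe_algebraMap]
  · simp [iterateFrobenius_def, single_pow, hG]

theorem isNilpotent_of_augmentation_eq_zero (p n : ℕ) [ExpChar k p]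
    (hG : ∀ g : G, g ^ p ^ n = 1) {x : MonoidAlgebra k G} (hx : augmentation k G x = 0) :
    IsNilpotent x :=
  ⟨p ^ n, by
    rw [pow_eq_algebraMap_augmentation_pow p n hG, hx, zero_pow (expChar_pow_pos k p n).ne',
      map_zero]⟩

theorem isLocalRing_of_pow_eq_one [IsLocalRing k] (p n : ℕ) [ExpChar k p]
    (hG : ∀ g : G, g ^ p ^ n = 1) : IsLocalRing (MonoidAlgebra k G) :=
  IsLocalRing.of_surjective_of_isNilpotent_of_map_eq_zero (augmentation k G).toRingHom
    augmentation_surjective fun _ ↦ isNilpotent_of_augmentation_eq_zero p n hG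

end MonoidAlgebra

/-- If `k` is a field of characteristic `p` and `G` is a finite commutative group of
`p`-power order, then the group algebra `k[G]` is a local ring. -/
theorem stmt_7 (p : ℕ) [Fact p.Prime] (k : Type*) [Field k] [CharP k p]
    (G : Type*) [CommGroup G] [Fintype G] (h : ∃ n : ℕ, Fintype.card G = p ^ n) :
    IsLocalRing (MonoidAlgebra k G) := by
  obtain ⟨n, hn⟩ := h
  exact MonoidAlgebra.isLocalRing_of_pow_eq_one p n fun g ↦ hn ▸ pow_card_eq_one
end

section
/- Let k be a commutative ring, G a commutative group, and H a subgroup of G. The kernel of the k-algebra homomorphism from the group algebra k[G] to the group algebra k[G/H] induced by the quotient homomorphism G → G/H equals the ideal of k[G] generated by the elements (single h 1) − 1 as h ranges over H, i.e., by the differences of the basis elements of elements of H and the identity. -/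
/-!
Write `I` for the ideal spanned by the `single h 1 - 1`, `h ∈ H`. Clearly `I` lies in the kernel.
Conversely, every `h ∈ H` becomes `1` in `k[G] ⧸ I`, so `g ↦ [single g 1]` factors through `G ⧸ H`
and induces an algebra map `k[G ⧸ H] → k[G] ⧸ I` whose composite with `k[G] → k[G ⧸ H]` is the
quotient map; hence the kernel is contained in `I`.
-/

namespace MonoidAlgebra

variable (k : Type*) [CommRing k]

theorem single_sub_one_mem_ker_mapDomainAlgHom {G Q : Type*} [Monoid G] [Monoid Q]
    (φ : G →* Q) {g : G} (hg : φ g = 1) :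
    single g (1 : k) - 1 ∈ RingHom.ker (mapDomainAlgHom k k φ) := by
  rw [RingHom.mem_ker, map_sub, map_one, mapDomainAlgHom_apply, mapDomain_single, hg, sub_eq_zero]
  rfl

variable {G : Type*} [CommGroup G] (H : Subgroup G)

noncomputable def relativeAugmentationIdeal : Ideal (MonoidAlgebra k G) :=
  Ideal.span {x | ∃ h ∈ H, x = single h (1 : k) - 1}

theorem relativeAugmentationIdeal_le_ker :
    relativeAugmentationIdeal k H ≤ RingHom.ker (mapDomainAlgHom k k (QuotientGroup.mk' H)) := by
  refine Ideal.span_le.2 ?_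
  rintro _ ⟨h, hh, rfl⟩
  exact single_sub_one_mem_ker_mapDomainAlgHom k _ ((QuotientGroup.eq_one_iff h).2 hh)

theorem le_ker_mk_comp_of :
    H ≤ ((Ideal.Quotient.mk (relativeAugmentationIdeal k H)).toMonoidHom.comp
      (of k G)).ker := by
  intro h hh
  rw [MonoidHom.mem_ker, MonoidHom.comp_apply, of_apply, RingHom.toMonoidHom_eq_coe,
    MonoidHom.coe_coe, ← map_one (Ideal.Quotient.mk _), Ideal.Quotient.eq]
  exact Ideal.subset_span ⟨h, hh, rfl⟩

noncomputable def liftQuotient :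
    MonoidAlgebra k (G ⧸ H) →ₐ[k] MonoidAlgebra k G ⧸ relativeAugmentationIdeal k H :=
  lift k _ (G ⧸ H) (QuotientGroup.lift H _ (le_ker_mk_comp_of k H))

theorem liftQuotient_comp_mapDomainAlgHom :
    (liftQuotient k H).comp (mapDomainAlgHom k k (QuotientGroup.mk' H)) =
      Ideal.Quotient.mkₐ k (relativeAugmentationIdeal k H) := by
  ext g
  simp [liftQuotient]

theorem ker_mapDomainAlgHom_mk' :
    RingHom.ker (mapDomainAlgHom k k (QuotientGroup.mk' H)) = relativeAugmentationIdeal k H := by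
  refine le_antisymm (fun x hx => ?_) (relativeAugmentationIdeal_le_ker k H)
  rw [← Ideal.Quotient.eq_zero_iff_mem, ← Ideal.Quotient.mkₐ_eq_mk k,
    ← liftQuotient_comp_mapDomainAlgHom, AlgHom.comp_apply, (RingHom.mem_ker).1 hx, map_zero]

end MonoidAlgebra

/-- For a commutative ring `k`, a commutative group `G` and a subgroup `H ≤ G`, the kernel of the
induced `k`-algebra map `k[G] → k[G/H]` is the ideal generated by the elements
`single h 1 - 1` for `h ∈ H`. -/
theorem stmt_8 (k : Type*) [CommRing k] (G : Type*) [CommGroup G] (H : Subgroup G) :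
    RingHom.ker (MonoidAlgebra.mapDomainAlgHom k k (QuotientGroup.mk' H)) =
      Ideal.span {x : MonoidAlgebra k G |
        ∃ h ∈ H, x = MonoidAlgebra.single h (1 : k) - 1} :=
  MonoidAlgebra.ker_mapDomainAlgHom_mk' k H
end

section
/- Let p be a prime number, G a commutative group (written multiplicatively), and n a nonnegative integer. Let m denote the augmentation ideal of the group algebra (ZMod p)[G], i.e., the kernel of the (ZMod p)-algebra homomorphism (ZMod p)[G] → ZMod p sending every basis element of G to 1. Then the kernel of the (ZMod p)-algebra homomorphism (ZMod p)[G] → (ZMod p)[G/G^{p^n}] induced by the quotient map G → G/G^{p^n}, where G^{p^n} is the subgroup of all p^n-th powers {g^{p^n} : g ∈ G}, equals the ideal of (ZMod p)[G] generated by the set {x^{p^n} : x ∈ m} (the p^n-th Frobenius power of the augmentation ideal). -/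
/-!
The augmentation ideal of `k[G]` is spanned by the elements `g - 1`, and the kernel of
`k[G] → k[G/N]` by the elements `h - 1` with `h ∈ N`. In characteristic `p` the Frobenius
power of an ideal is its image under the `p^n`-th power ring endomorphism, so it is spanned by
the `(g - 1)^(p^n) = g^(p^n) - 1`, which are exactly the generators `h - 1`, `h ∈ G^(p^n)`.
-/

open MonoidAlgebra

namespace MonoidAlgebra

variable {k : Type*} [CommRing k]

theorem ker_lift_one_eq_span {G : Type*} [Monoid G] :
    RingHom.ker (lift k k G 1) = Ideal.span (Set.range fun g => of k G g - 1) := by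
  refine le_antisymm (fun x hx => ?_) (Ideal.span_le.2 ?_)
  · have hsum : ∑ g ∈ x.coeff.support, x.coeff g = 0 := by
      simpa [lift_apply, Finsupp.sum] using hx
    have hrepr : (x.coeff.sum fun g c => c • (of k G g - 1)) = x := by
      simp only [Finsupp.sum, smul_sub, of_apply, smul_single', mul_one, Finset.sum_sub_distrib,
        ← Finset.sum_smul, hsum, zero_smul, sub_zero]
      exact sum_coeff_single x
    rw [← hrepr]
    exact Submodule.sum_mem _ fun g _ =>
      Submodule.smul_of_tower_mem _ _ (Ideal.subset_span (Set.mem_range_self g))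
  · rintro _ ⟨g, rfl⟩
    simp

theorem ker_mapDomainAlgHom_mk'_s10 {G : Type*} [CommGroup G] (N : Subgroup G) :
    RingHom.ker (mapDomainAlgHom k k (QuotientGroup.mk' N)) =
      Ideal.span ((fun h => of k G h - 1) '' N) := by
  set I := Ideal.span ((fun h => of k G h - 1) '' N)
  refine le_antisymm (fun x hx => ?_) (Ideal.span_le.2 ?_)
  · have hN : N ≤ ((Ideal.Quotient.mk I : k[G] →* k[G] ⧸ I).comp (of k G)).ker :=
      fun h hh =>
        (Ideal.Quotient.mk_eq_mk_iff_sub_mem (of k G h) 1).2 (Ideal.subset_span ⟨h, hh, rfl⟩)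
    set ψ := lift k (k[G] ⧸ I) (G ⧸ N) (QuotientGroup.lift N _ hN)
    have hψ : ψ.comp (mapDomainAlgHom k k (QuotientGroup.mk' N)) = Ideal.Quotient.mkₐ k I :=
      algHom_ext (fun g => by simp [ψ]) (Subsingleton.elim _ _)
    rw [← Ideal.Quotient.eq_zero_iff_mem, ← Ideal.Quotient.mkₐ_eq_mk k, ← hψ,
      AlgHom.comp_apply, RingHom.mem_ker.1 hx, map_zero]
  · rintro _ ⟨h, hh, rfl⟩
    rw [SetLike.mem_coe, RingHom.mem_ker, map_sub, map_one, sub_eq_zero]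
    simp [(QuotientGroup.eq_one_iff h).2 hh, one_def]

end MonoidAlgebra

/-- Let `G` be a commutative group and let `𝔪` be the augmentation ideal of `(ZMod p)[G]`.
The kernel of the induced map `(ZMod p)[G] → (ZMod p)[G/G^(p^n)]`, where `G^(p^n)` is the
subgroup of `p^n`-th powers, is the `p^n`-th Frobenius power of `𝔪`, i.e. the ideal generated
by the `p^n`-th powers of elements of `𝔪`. -/
theorem stmt_10 (p : ℕ) [Fact p.Prime] (G : Type*) [CommGroup G] (n : ℕ) :
    RingHom.ker (MonoidAlgebra.mapDomainAlgHom (ZMod p) (ZMod p)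
        (QuotientGroup.mk' (powMonoidHom (p ^ n) : G →* G).range)) =
      Ideal.span ((fun x : MonoidAlgebra (ZMod p) G => x ^ (p ^ n)) ''
        (RingHom.ker
          (MonoidAlgebra.lift (ZMod p) (ZMod p) G (1 : G →* ZMod p)) :
            Set (MonoidAlgebra (ZMod p) G))) := by
  have : CharP (ZMod p)[G] p := charP_of_injective_algebraMap' (ZMod p) p
  change _ = Ideal.map (iterateFrobenius (ZMod p)[G] p n) _
  rw [ker_mapDomainAlgHom_mk'_s10, ker_lift_one_eq_span, Ideal.map_span, MonoidHom.coe_range,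
    ← Set.range_comp, ← Set.range_comp]
  congr 2
  ext g
  simp [iterateFrobenius_def, sub_pow_expChar_pow]
end
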